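/- arXiv:1705.02779 — 7 statements merged into one kernel-verified Lean document; each statement's English description precedes it below -/
import Mathlib

section
/- Let f : (0,∞) → ℂ be continuous, let m ∈ ℕ and let f₋ₘ, …, f₀ ∈ ℂ be such that (i) there is C > 0 with |f(t) − ∑_{i=−m}^{0} fᵢ tⁱ| ≤ C·t for all t ∈ (0,1], and (ii) there are C′, λ > 0 with |f(t)| ≤ C′·e^{−λt} for all t ≥ 1. Then there exists a function g : ℂ → ℂ, holomorphic on {z : Re z > −1} ∖ {1, 2, …, m}, such that: (a) for every z with Re z > m one has Γ(z)·g(z) = ∫₀^∞ f(t)·t^{z−1} dt; (b) g(0) = f₀; and (c) g′(0) = ∫₀¹ (f(t) − ∑_{i=−m}^{0} fᵢ tⁱ) dt/t + ∫₁^∞ f(t) dt/t + ∑_{i=−m}^{−1} fᵢ/i + γ·f₀, where γ is the Euler–Mascheroni constant (γ = −Γ′(1)). -/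
/-!
Cut `f` on `(0, ∞)` into `(f - P)·𝟙_(0,1]`, `P·𝟙_(0,1]` and `f·𝟙_(1,∞)`, where
`P t = ∑_{i=-m}^{0} cᵢ tⁱ`. The first piece is `O(t)` at `0`, so its Mellin transform is holomorphic
on `Re z > -1`; the last decays exponentially, so its transform is entire; and `tⁱ·𝟙_(0,1]` has
Mellin transform `1 / (z + i)`. Dividing by `Γ` and using `z Γ(z) = Γ(z + 1)` to absorb the pole
`c₀ / z` gives the extension
`g z = (A z + ∑_{i<0} cᵢ / (z + i)) / Γ(z) + c₀ / Γ(z + 1)`, with `A` the sum of the two regular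
transforms. As `1/Γ` vanishes at `0` with derivative `1`, and `(1/Γ(· + 1))'(0) = -Γ'(1) = γ`,
this yields `g 0 = c₀` and the stated `g' 0`.
-/

open Filter Set MeasureTheory

open scoped Topology

section Mellin

variable {E : Type*} [NormedAddCommGroup E]

theorem hasMellin_sum [NormedSpace ℂ E] {ι : Type*} (s : Finset ι) {F : ι → ℝ → E} {M : ι → E}
    {z : ℂ} (h : ∀ i ∈ s, HasMellin (F i) z (M i)) :
    HasMellin (fun t => ∑ i ∈ s, F i t) z (∑ i ∈ s, M i) := by
  simp only [HasMellin, MellinConvergent, mellin, Finset.smul_sum]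
  refine ⟨integrable_finsetSum s fun i hi => (h i hi).1, ?_⟩
  rw [integral_finsetSum s fun i hi => (h i hi).1]
  exact Finset.sum_congr rfl fun i hi => (h i hi).2

theorem ContinuousOn.integrableOn_of_norm_le {s : Set ℝ} (hs : MeasurableSet s) {F : ℝ → E}
    (hF : ContinuousOn F s) {g : ℝ → ℝ} (hg : IntegrableOn g s) (hle : ∀ t ∈ s, ‖F t‖ ≤ g t) :
    IntegrableOn F s :=
  hg.mono' (hF.aestronglyMeasurable hs) ((ae_restrict_iff' hs).mpr (ae_of_all _ hle))

theorem isBigO_nhdsGT_of_norm_le_mul {F : ℝ → E} {C : ℝ} (h : ∀ t ∈ Ioc 0 1, ‖F t‖ ≤ C * t) :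
    F =O[𝓝[>] 0] (· ^ (-(-1 : ℝ))) := .of_bound C <| by
  filter_upwards [Ioc_mem_nhdsGT zero_lt_one] with t ht
  rw [neg_neg, Real.rpow_one, Real.norm_of_nonneg ht.1.le]
  exact h t ht

theorem isBigO_atTop_of_norm_le_mul_exp {F : ℝ → E} {C lam : ℝ}
    (h : ∀ t : ℝ, 1 ≤ t → ‖F t‖ ≤ C * Real.exp (-lam * t)) :
    F =O[atTop] fun t => Real.exp (-lam * t) := .of_bound C <| by
  filter_upwards [eventually_ge_atTop 1] with t ht
  rw [Real.norm_of_nonneg (Real.exp_pos _).le]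
  exact h t ht

theorem mellin_congr [NormedSpace ℂ E] {F G : ℝ → E} (h : EqOn F G (Ioi 0)) (z : ℂ) :
    mellin F z = mellin G z :=
  setIntegral_congr_fun measurableSet_Ioi fun t ht => by rw [h ht]

theorem mellin_indicator [NormedSpace ℂ E] {s : Set ℝ} (hs : MeasurableSet s) (hs0 : s ⊆ Ioi 0)
    (F : ℝ → E) (z : ℂ) : mellin (s.indicator F) z = ∫ t in s, (t : ℂ) ^ (z - 1) • F t := by
  rw [mellin, ← indicator_smul, setIntegral_indicator hs, inter_eq_right.mpr hs0]

theorem mellin_indicator_zero {s : Set ℝ} (hs : MeasurableSet s) (hs0 : s ⊆ Ioi 0)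
    (F : ℝ → ℂ) : mellin (s.indicator F) 0 = ∫ t in s, F t / t := by
  simp only [mellin_indicator hs hs0, zero_sub, Complex.cpow_neg_one, smul_eq_mul,
    inv_mul_eq_div]

theorem locallyIntegrableOn_indicator {s : Set ℝ} (hs : MeasurableSet s) (hs0 : s ⊆ Ioi 0)
    {F : ℝ → E} (hF : IntegrableOn F s) : LocallyIntegrableOn (s.indicator F) (Ioi 0) := by
  refine IntegrableOn.locallyIntegrableOn ?_
  rwa [IntegrableOn, integrable_indicator_iff hs, IntegrableOn,
    Measure.restrict_restrict_of_subset hs0]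

theorem indicator_Ioc_isBigO_atTop (F : ℝ → E) (a : ℝ) :
    (Ioc 0 1).indicator F =O[atTop] (· ^ (-a)) := by
  refine EventuallyEq.trans_isBigO ?_ (Asymptotics.isBigO_zero _ _)
  filter_upwards [eventually_gt_atTop 1] with t ht
  exact indicator_of_notMem (fun h => ht.not_ge h.2) F

theorem indicator_Ioc_isBigO_nhdsGT {F : ℝ → E} {b : ℝ} (hF : F =O[𝓝[>] 0] (· ^ (-b))) :
    (Ioc 0 1).indicator F =O[𝓝[>] 0] (· ^ (-b)) :=
  (eventuallyEq_of_mem (Ioc_mem_nhdsGT zero_lt_one) fun _ ht =>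
    indicator_of_mem ht F).trans_isBigO hF

theorem indicator_Ioi_isBigO_nhdsGT (F : ℝ → E) (b : ℝ) :
    (Ioi 1).indicator F =O[𝓝[>] 0] (· ^ (-b)) := by
  refine EventuallyEq.trans_isBigO ?_ (Asymptotics.isBigO_zero _ _)
  filter_upwards [Ioc_mem_nhdsGT zero_lt_one] with t ht
  exact indicator_of_notMem (fun h => ht.2.not_gt h) F

theorem indicator_Ioi_isBigO_atTop {F : ℝ → E} {g : ℝ → ℝ} (hF : F =O[atTop] g) :
    (Ioi 1).indicator F =O[atTop] g :=
  (eventuallyEq_of_mem (Ioi_mem_atTop 1) fun _ ht => indicator_of_mem ht F).trans_isBigO hF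

theorem mellinConvergent_indicator_Ioc [NormedSpace ℂ E] {F : ℝ → E} {b : ℝ}
    (hF : IntegrableOn F (Ioc 0 1)) (hF0 : F =O[𝓝[>] 0] (· ^ (-b))) {z : ℂ} (hz : b < z.re) :
    MellinConvergent ((Ioc 0 1).indicator F) z :=
  mellinConvergent_of_isBigO_rpow (locallyIntegrableOn_indicator measurableSet_Ioc
    Ioc_subset_Ioi_self hF) (indicator_Ioc_isBigO_atTop F _) (lt_add_one z.re)
    (indicator_Ioc_isBigO_nhdsGT hF0) hz

theorem differentiableAt_mellin_indicator_Ioc [NormedSpace ℂ E] {F : ℝ → E} {b : ℝ}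
    (hF : IntegrableOn F (Ioc 0 1)) (hF0 : F =O[𝓝[>] 0] (· ^ (-b))) {z : ℂ} (hz : b < z.re) :
    DifferentiableAt ℂ (mellin ((Ioc 0 1).indicator F)) z :=
  mellin_differentiableAt_of_isBigO_rpow (locallyIntegrableOn_indicator measurableSet_Ioc
    Ioc_subset_Ioi_self hF) (indicator_Ioc_isBigO_atTop F _) (lt_add_one z.re)
    (indicator_Ioc_isBigO_nhdsGT hF0) hz

theorem mellinConvergent_indicator_Ioi [NormedSpace ℂ E] {F : ℝ → E} {lam : ℝ} (hlam : 0 < lam)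
    (hF : IntegrableOn F (Ioi 1)) (hF_top : F =O[atTop] fun t => Real.exp (-lam * t)) (z : ℂ) :
    MellinConvergent ((Ioi 1).indicator F) z :=
  mellinConvergent_of_isBigO_rpow_exp hlam (locallyIntegrableOn_indicator measurableSet_Ioi
    (Ioi_subset_Ioi zero_le_one) hF) (indicator_Ioi_isBigO_atTop hF_top)
    (indicator_Ioi_isBigO_nhdsGT F (z.re - 1)) (sub_one_lt z.re)

theorem differentiable_mellin_indicator_Ioi [NormedSpace ℂ E] {F : ℝ → E} {lam : ℝ}
    (hlam : 0 < lam) (hF : IntegrableOn F (Ioi 1))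
    (hF_top : F =O[atTop] fun t => Real.exp (-lam * t)) :
    Differentiable ℂ (mellin ((Ioi 1).indicator F)) := fun z =>
  mellin_differentiableAt_of_isBigO_rpow_exp hlam (locallyIntegrableOn_indicator
    measurableSet_Ioi (Ioi_subset_Ioi zero_le_one) hF) (indicator_Ioi_isBigO_atTop hF_top)
    (indicator_Ioi_isBigO_nhdsGT F (z.re - 1)) (sub_one_lt z.re)

end Mellin

theorem continuousOn_sum_mul_zpow (s : Finset ℤ) (c : ℤ → ℂ) :
    ContinuousOn (fun t : ℝ => ∑ i ∈ s, c i * (t : ℂ) ^ i) (Ioi 0) :=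
  continuousOn_finsetSum _ fun i _ => continuousOn_const.mul
    (Complex.continuous_ofReal.continuousOn.zpow₀ i
      fun _ ht => Or.inl (Complex.ofReal_ne_zero.mpr (ne_of_gt ht)))

theorem hasMellin_indicator_Ioc_sum_cpow {ι : Type*} (s : Finset ι) (c a : ι → ℂ) {z : ℂ}
    (h : ∀ i ∈ s, 0 < (z + a i).re) :
    HasMellin ((Ioc 0 1).indicator fun t => ∑ i ∈ s, c i * (t : ℂ) ^ a i) z
      (∑ i ∈ s, c i / (z + a i)) := by
  have hterm (i) (hi : i ∈ s) :
      HasMellin ((Ioc 0 1).indicator fun t : ℝ => c i * (t : ℂ) ^ a i) z (c i / (z + a i)) := by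
    obtain ⟨hconv, hval⟩ := hasMellin_cpow_Ioc (a i) (by simpa using h i hi)
    simp_rw [← smul_eq_mul, indicator_const_smul, div_eq_mul_one_div (c i), ← smul_eq_mul (c i)]
    exact ⟨hconv.const_smul _, by rw [mellin_const_smul, hval]⟩
  convert hasMellin_sum s hterm using 2 with t
  have := congrFun (Finset.indicator_sum s (Ioc 0 1) fun i (t : ℝ) => c i * (t : ℂ) ^ a i) t
  simpa only [Finset.sum_fn, Finset.sum_apply] using this

theorem hasMellin_indicator_Ioc_sum_zpow (m : ℕ) (c : ℤ → ℂ) {z : ℂ} (hz : m < z.re) :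
    HasMellin ((Ioc 0 1).indicator fun t => ∑ i ∈ Finset.Icc (-(m : ℤ)) 0, c i * (t : ℂ) ^ i) z
      (∑ i ∈ Finset.Icc (-(m : ℤ)) 0, c i / (z + i)) := by
  have hre (i) (hi : i ∈ Finset.Icc (-(m : ℤ)) 0) : 0 < (z + (i : ℂ)).re := by
    have him : (-(m : ℤ) : ℝ) ≤ i := by exact_mod_cast (Finset.mem_Icc.mp hi).1
    push_cast at him
    simp only [Complex.add_re, Complex.intCast_re]
    linarith
  simpa only [Complex.cpow_intCast] using
    hasMellin_indicator_Ioc_sum_cpow (Finset.Icc (-(m : ℤ)) 0) c (fun i => (i : ℂ)) hre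

theorem setIntegral_mul_cpow_eq_mellin_add {f P : ℝ → ℂ} {z s : ℂ}
    (hnear : MellinConvergent ((Ioc 0 1).indicator (f - P)) z)
    (hP : HasMellin ((Ioc 0 1).indicator P) z s)
    (hfar : MellinConvergent ((Ioi 1).indicator f) z) :
    ∫ t in Ioi 0, f t * (t : ℂ) ^ (z - 1) =
      mellin ((Ioc 0 1).indicator (f - P)) z + mellin ((Ioi 1).indicator f) z + s := by
  have hsplit : EqOn f
      (fun t => (Ioc 0 1).indicator (f - P) t + (Ioc 0 1).indicator P t + (Ioi 1).indicator f t)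
      (Ioi 0) := by
    intro t (ht : 0 < t)
    rcases le_or_gt t 1 with h1 | h1
    · simp [indicator_of_mem (show t ∈ Ioc 0 1 from ⟨ht, h1⟩), h1.not_gt]
    · simp [indicator_of_mem (show t ∈ Ioi 1 from h1), h1.not_ge]
  calc ∫ t in Ioi 0, f t * (t : ℂ) ^ (z - 1) = mellin f z := by
        simp only [mellin, smul_eq_mul, mul_comm]
    _ = _ := mellin_congr hsplit z
    _ = _ := by
      rw [(hasMellin_add (hasMellin_add hnear hP.1).1 hfar).2, (hasMellin_add hnear hP.1).2, hP.2]
      ring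

theorem hasDerivAt_inv_Gamma_add_one_zero :
    HasDerivAt (fun z : ℂ => (Complex.Gamma (z + 1))⁻¹) (Real.eulerMascheroniConstant : ℂ) 0 := by
  have hGamma : HasDerivAt Complex.Gamma (-(Real.eulerMascheroniConstant : ℂ)) (0 + 1) := by
    simpa using Complex.hasDerivAt_Gamma_one
  simpa [Complex.Gamma_one] using
    (hGamma.comp_add_const 0 1).fun_inv (by simp [Complex.Gamma_one])

theorem hasDerivAt_inv_Gamma_zero : HasDerivAt (fun z : ℂ => (Complex.Gamma z)⁻¹) 1 0 := by
  rw [funext Complex.one_div_Gamma_eq_self_mul_one_div_Gamma_add_one]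
  simpa [Complex.Gamma_one] using
    (hasDerivAt_id (0 : ℂ)).fun_mul hasDerivAt_inv_Gamma_add_one_zero

noncomputable def polarSum (m : ℕ) (c : ℤ → ℂ) (z : ℂ) : ℂ :=
  ∑ i ∈ Finset.Icc (-(m : ℤ)) (-1), c i / (z + i)

theorem differentiableAt_polarSum (m : ℕ) (c : ℤ → ℂ) {z : ℂ}
    (hz : z ∉ {z : ℂ | ∃ k : ℕ, 1 ≤ k ∧ k ≤ m ∧ z = k}) :
    DifferentiableAt ℂ (polarSum m c) z := by
  refine DifferentiableAt.fun_sum fun i hi =>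
    (differentiableAt_const _).div (differentiableAt_id.add_const _) fun hzi => hz ?_
  obtain ⟨him, hi1⟩ := Finset.mem_Icc.mp hi
  have htoNat : ((-i).toNat : ℤ) = -i := Int.toNat_of_nonneg (by omega)
  refine ⟨(-i).toNat, by omega, by omega, ?_⟩
  rw [eq_neg_of_add_eq_zero_left hzi, ← Int.cast_natCast, htoNat, Int.cast_neg]

noncomputable def mellinExtension (A : ℂ → ℂ) (m : ℕ) (c : ℤ → ℂ) (z : ℂ) : ℂ :=
  (Complex.Gamma z)⁻¹ * (A z + polarSum m c z) + c 0 * (Complex.Gamma (z + 1))⁻¹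

section Extension

variable {A : ℂ → ℂ} (m : ℕ) (c : ℤ → ℂ)

theorem differentiableOn_mellinExtension {U : Set ℂ} (hA : DifferentiableOn ℂ A U) :
    DifferentiableOn ℂ (mellinExtension A m c)
      (U \ {z : ℂ | ∃ k : ℕ, 1 ≤ k ∧ k ≤ m ∧ z = k}) := by
  have hpolar : DifferentiableOn ℂ (polarSum m c)
      (U \ {z : ℂ | ∃ k : ℕ, 1 ≤ k ∧ k ≤ m ∧ z = k}) := fun z hz =>
    (differentiableAt_polarSum m c hz.2).differentiableWithinAt
  exact (Complex.differentiable_one_div_Gamma.differentiableOn.mul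
    ((hA.mono sdiff_subset).add hpolar)).add
    ((Complex.differentiable_one_div_Gamma.comp (differentiable_id.add_const 1)).const_mul
      (c 0)).differentiableOn

theorem Gamma_mul_mellinExtension {z : ℂ} (hz : 0 < z.re) :
    Complex.Gamma z * mellinExtension A m c z =
      A z + ∑ i ∈ Finset.Icc (-(m : ℤ)) 0, c i / (z + i) := by
  have hz0 : z ≠ 0 := by rintro rfl; simp at hz
  have hGamma := Complex.Gamma_ne_zero_of_re_pos hz
  have hIcc : Finset.Icc (-(m : ℤ)) 0 = insert 0 (Finset.Icc (-(m : ℤ)) (-1)) := by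
    ext i
    simp only [Finset.mem_Icc, Finset.mem_insert]
    omega
  rw [mellinExtension, polarSum, Complex.Gamma_add_one z hz0, hIcc, Finset.sum_insert (by simp),
    Int.cast_zero, add_zero]
  field_simp
  ring

theorem mellinExtension_zero : mellinExtension A m c 0 = c 0 := by
  simp [mellinExtension, Complex.Gamma_one]

theorem hasDerivAt_mellinExtension_zero (hA : DifferentiableAt ℂ A 0) :
    HasDerivAt (mellinExtension A m c)
      (A 0 + ∑ i ∈ Finset.Icc (-(m : ℤ)) (-1), c i / i + Real.eulerMascheroniConstant * c 0)
      0 := by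
  have hpolar : DifferentiableAt ℂ (polarSum m c) 0 :=
    differentiableAt_polarSum m c fun ⟨k, hk, _, hk0⟩ => by norm_cast at hk0; omega
  refine HasDerivAt.congr_deriv (f := mellinExtension A m c)
    ((hasDerivAt_inv_Gamma_zero.fun_mul (hA.hasDerivAt.fun_add hpolar.hasDerivAt)).fun_add
      (hasDerivAt_inv_Gamma_add_one_zero.const_mul (c 0))) ?_
  simp only [Complex.Gamma_zero, inv_zero, zero_mul, one_mul, add_zero, polarSum, zero_add]
  ring

end Extension

/-- Properties of the Mellin transform of a function admitting an asymptotic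
expansion `∑_{i=-m}^{0} fᵢ tⁱ + O(t)` at `t → 0⁺` and exponential decay at infinity:
it extends holomorphically to `{Re z > -1} ∖ {1, …, m}`, with explicit value and
derivative at `z = 0`. -/
theorem mellin_transform_extension_value_and_deriv_at_zero
    (f : ℝ → ℂ) (hf : ContinuousOn f (Set.Ioi (0 : ℝ)))
    (m : ℕ) (c : ℤ → ℂ)
    (h0 : ∃ C > (0 : ℝ), ∀ t ∈ Set.Ioc (0 : ℝ) 1,
      ‖f t - ∑ i ∈ Finset.Icc (-(m : ℤ)) 0, c i * (t : ℂ) ^ i‖ ≤ C * t)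
    (hinf : ∃ C' > (0 : ℝ), ∃ lam > (0 : ℝ), ∀ t : ℝ, 1 ≤ t →
      ‖f t‖ ≤ C' * Real.exp (-lam * t)) :
    ∃ g : ℂ → ℂ,
      DifferentiableOn ℂ g
        ({z : ℂ | -1 < z.re} \ {z : ℂ | ∃ k : ℕ, 1 ≤ k ∧ k ≤ m ∧ z = (k : ℂ)}) ∧
      (∀ z : ℂ, (m : ℝ) < z.re →
        Complex.Gamma z * g z = ∫ t in Set.Ioi (0 : ℝ), f t * (t : ℂ) ^ (z - 1)) ∧
      g 0 = c 0 ∧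
      HasDerivAt g
        ((∫ t in Set.Ioc (0 : ℝ) 1,
            (f t - ∑ i ∈ Finset.Icc (-(m : ℤ)) 0, c i * (t : ℂ) ^ i) / (t : ℂ)) +
          (∫ t in Set.Ioi (1 : ℝ), f t / (t : ℂ)) +
          (∑ i ∈ Finset.Icc (-(m : ℤ)) (-1), c i / (i : ℂ)) +
          (Real.eulerMascheroniConstant : ℂ) * c 0) 0 := by
  obtain ⟨C, -, hC⟩ := h0
  obtain ⟨C', -, lam, hlam, hC'⟩ := hinf
  set P : ℝ → ℂ := fun t => ∑ i ∈ Finset.Icc (-(m : ℤ)) 0, c i * (t : ℂ) ^ i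
  have hnear : IntegrableOn (f - P) (Ioc 0 1) :=
    ((hf.sub (continuousOn_sum_mul_zpow _ c)).mono Ioc_subset_Ioi_self).integrableOn_of_norm_le
      measurableSet_Ioc (continuous_const.mul continuous_id).integrableOn_Ioc hC
  have hfar : IntegrableOn f (Ioi 1) :=
    (hf.mono (Ioi_subset_Ioi zero_le_one)).integrableOn_of_norm_le measurableSet_Ioi
      ((exp_neg_integrableOn_Ioi 1 hlam).const_mul C') fun t ht => hC' t ht.le
  have hnear0 := isBigO_nhdsGT_of_norm_le_mul hC
  have hfar_top := isBigO_atTop_of_norm_le_mul_exp hC'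
  set A : ℂ → ℂ := fun z =>
    mellin ((Ioc 0 1).indicator (f - P)) z + mellin ((Ioi 1).indicator f) z
  have hA : DifferentiableOn ℂ A {z | -1 < z.re} := fun z hz =>
    ((differentiableAt_mellin_indicator_Ioc hnear hnear0 hz).add
      (differentiable_mellin_indicator_Ioi hlam hfar hfar_top z)).differentiableWithinAt
  refine ⟨mellinExtension A m c, differentiableOn_mellinExtension m c hA, fun z hz => ?_,
    mellinExtension_zero m c, ?_⟩
  · have hz0 : 0 < z.re := (Nat.cast_nonneg m).trans_lt hz
    rw [Gamma_mul_mellinExtension m c hz0, setIntegral_mul_cpow_eq_mellin_add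
      (mellinConvergent_indicator_Ioc hnear hnear0 (by linarith))
      (hasMellin_indicator_Ioc_sum_zpow m c hz)
      (mellinConvergent_indicator_Ioi hlam hfar hfar_top z)]
  · have hA0 : DifferentiableAt ℂ A 0 :=
      hA.differentiableAt ((isOpen_lt continuous_const Complex.continuous_re).mem_nhds (by simp))
    convert hasDerivAt_mellinExtension_zero m c hA0 using 3
    simp only [A, mellin_indicator_zero measurableSet_Ioc Ioc_subset_Ioi_self,
      mellin_indicator_zero measurableSet_Ioi (Ioi_subset_Ioi zero_le_one), Pi.sub_apply, P]
end

section
/- For every z ∈ ℂ with Re z > 2 one has ∫₀^∞ u^{z−1} · e^{−2πu}/(1 − e^{−2πu})² du = Γ(z) · (2π)^{−z} · ζ(z−1). -/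
open Real Set MeasureTheory

/-! Expanding `e^{-2πu}/(1 - e^{-2πu})² = ∑ n e^{-2πnu}` and integrating term by term (Fubini is
justified by absolute convergence for `Re z > 2`), each term contributes
`n · Γ(z) (2πn)^{-z} = Γ(z) (2π)^{-z} n^{1-z}`, and these sum to `Γ(z) (2π)^{-z} ζ(z - 1)`. -/

theorem hasSum_natCast_mul_exp_neg_mul {c : ℝ} (hc : 0 < c) :
    HasSum (fun n : ℕ ↦ (n : ℝ) * rexp (-(c * n))) (rexp (-c) / (1 - rexp (-c)) ^ 2) := by
  have hr : ‖rexp (-c)‖ < 1 := by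
    rw [Real.norm_of_nonneg (exp_pos _).le, exp_lt_one_iff]
    linarith
  refine (hasSum_coe_mul_geometric_of_norm_lt_one hr).congr_fun fun n ↦ ?_
  rw [← exp_nat_mul, mul_neg, mul_comm c]

theorem LSeries.term_natCast_eq_term_one (s : ℂ) (n : ℕ) :
    LSeries.term (fun n ↦ (n : ℂ)) s n = LSeries.term 1 (s - 1) n := by
  rcases eq_or_ne n 0 with rfl | hn
  · simp
  have hn' : (n : ℂ) ≠ 0 := Nat.cast_ne_zero.mpr hn
  rw [LSeries.term_of_ne_zero hn, LSeries.term_of_ne_zero hn, Pi.one_apply,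
    Complex.cpow_sub _ _ hn', Complex.cpow_one, one_div_div]

theorem LSeriesSummable_natCast {s : ℂ} (hs : 2 < s.re) :
    LSeriesSummable (fun n ↦ (n : ℂ)) s := by
  have : LSeriesSummable 1 (s - 1) := LSeriesSummable_one_iff.mpr (by simp; linarith)
  exact (summable_congr (LSeries.term_natCast_eq_term_one s)).mpr this

theorem LSeries_natCast_eq_riemannZeta {s : ℂ} (hs : 2 < s.re) :
    LSeries (fun n ↦ (n : ℂ)) s = riemannZeta (s - 1) := by
  rw [← LSeries_one_eq_riemannZeta (by simp; linarith)]
  exact tsum_congr (LSeries.term_natCast_eq_term_one s)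

theorem Gamma_mul_div_mul_natCast_cpow {a : ℕ → ℂ} (ha : a 0 = 0) {c : ℝ} (hc : 0 ≤ c)
    (s : ℂ) (n : ℕ) :
    Complex.Gamma s * a n / ((c * n : ℝ) : ℂ) ^ s
      = Complex.Gamma s * (c : ℂ) ^ (-s) * LSeries.term a s n := by
  rcases eq_or_ne n 0 with rfl | hn
  · simp [ha]
  rw [LSeries.term_of_ne_zero hn, Complex.ofReal_mul,
    Complex.mul_cpow_ofReal_nonneg hc n.cast_nonneg, Complex.cpow_neg, Complex.ofReal_natCast]
  ring

theorem mellin_eq_Gamma_mul_LSeries {a : ℕ → ℂ} {F : ℝ → ℂ} {c : ℝ} {s : ℂ} (ha : a 0 = 0)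
    (hc : 0 < c) (hs : 0 < s.re)
    (hF : ∀ t ∈ Ioi 0, HasSum (fun n ↦ a n * rexp (-(c * n) * t)) (F t))
    (h_sum : LSeriesSummable a s) :
    mellin F s = Complex.Gamma s * (c : ℂ) ^ (-s) * LSeries a s := by
  have hp (n : ℕ) : a n = 0 ∨ 0 < c * n := by
    rcases eq_or_ne n 0 with rfl | hn
    · exact .inl ha
    · exact .inr (by positivity)
  have h_sum' : Summable fun n : ℕ ↦ ‖a n‖ / (c * n) ^ s.re := by
    refine (h_sum.norm.mul_left (c ^ (-s.re))).congr fun n ↦ ?_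
    rw [LSeries.norm_term_eq]
    rcases eq_or_ne n 0 with rfl | hn
    · simp [ha]
    rw [if_neg hn, Real.mul_rpow hc.le n.cast_nonneg, Real.rpow_neg hc.le]
    ring
  rw [← (hasSum_mellin hp hs hF h_sum').tsum_eq, LSeries, ← tsum_mul_left]
  exact tsum_congr (Gamma_mul_div_mul_natCast_cpow ha hc.le s)

/-- The Mellin transform identity `∫₀^∞ u^{z-1} e^{-2πu}/(1-e^{-2πu})² du
  = Γ(z) (2π)^{-z} ζ(z-1)` for `Re z > 2`. -/
theorem mellin_g_two (z : ℂ) (hz : 2 < z.re) :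
    ∫ u in Set.Ioi (0 : ℝ),
        (u : ℂ) ^ (z - 1) *
          ((Real.exp (-(2 * π * u)) / (1 - Real.exp (-(2 * π * u))) ^ 2 : ℝ) : ℂ)
      = Complex.Gamma z * (2 * (π : ℂ)) ^ (-z) * riemannZeta (z - 1) := by
  have hF (t : ℝ) (ht : t ∈ Ioi 0) : HasSum (fun n : ℕ ↦ (n : ℂ) * rexp (-(2 * π * n) * t))
      ((rexp (-(2 * π * t)) / (1 - rexp (-(2 * π * t))) ^ 2 : ℝ) : ℂ) := by
    have hc : 0 < 2 * π * t := mul_pos two_pi_pos ht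
    convert Complex.hasSum_ofReal.mpr (hasSum_natCast_mul_exp_neg_mul hc) using 1
    funext n
    push_cast
    ring_nf
  have hmellin := mellin_eq_Gamma_mul_LSeries Nat.cast_zero two_pi_pos (by linarith) hF
    (LSeriesSummable_natCast hz)
  rw [LSeries_natCast_eq_riemannZeta hz] at hmellin
  exact_mod_cast hmellin
end

section
/- For every z ∈ ℂ with Re z > 2 one has ∫₀^∞ u^{z−1} · u·e^{−2πu}/(1 − e^{−2πu})³ du = Γ(z) · z · (2π)^{−(z+1)} · (ζ(z−1) + ζ(z))/2. -/
open Real Set MeasureTheory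

/-! With `r = e^{-au}` one has `r / (1 - r)^3 = ∑ C(n+1, 2) rⁿ`, so integrating termwise
(`hasSum_mellin`) turns the Mellin transform at `s` into `Γ(s) ∑ C(n+1, 2) (an)^{-s}`, and
`C(n+1, 2) = (n² + n)/2` splits this Dirichlet series into `a^{-s} (ζ(s-2) + ζ(s-1)) / 2`.
The extra factor `u` in the integrand shifts `s = z + 1`, and `Γ(z + 1) = z Γ(z)`. -/

lemma hasSum_choose_succ_mul_geometric_of_norm_lt_one {𝕜 : Type*} [NormedField 𝕜]
    (k : ℕ) {r : 𝕜} (hr : ‖r‖ < 1) :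
    HasSum (fun n ↦ ((n + k).choose (k + 1) : 𝕜) * r ^ n) (r / (1 - r) ^ (k + 2)) := by
  have h := (hasSum_choose_mul_geometric_of_norm_lt_one (k + 1) hr).mul_left r
  rw [← div_eq_mul_one_div] at h
  have hsucc := HasSum.zero_add (f := fun n ↦ ((n + k).choose (k + 1) : 𝕜) * r ^ n)
    (h.congr_fun fun n ↦ by rw [pow_succ', add_right_comm, add_assoc, mul_left_comm])
  rwa [zero_add, Nat.choose_eq_zero_of_lt k.lt_succ_self, Nat.cast_zero, zero_mul,
    zero_add] at hsucc

lemma hasSum_choose_two_mul_exp_neg {x : ℝ} (hx : 0 < x) :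
    HasSum (fun n : ℕ ↦ ((n + 1).choose 2 : ℝ) * rexp (-(n * x)))
      (rexp (-x) / (1 - rexp (-x)) ^ 3) := by
  have hr : ‖rexp (-x)‖ < 1 := by
    rw [norm_of_nonneg (exp_pos _).le, Real.exp_lt_one_iff]
    linarith
  simpa [← exp_nat_mul] using hasSum_choose_succ_mul_geometric_of_norm_lt_one 1 hr

lemma choose_two_div_mul_cpow_eq {a : ℝ} (ha : 0 < a) {s : ℂ} (hs₁ : s ≠ 1) (hs₂ : s ≠ 2)
    (n : ℕ) :
    ((n + 1).choose 2 : ℂ) / ((a * n : ℝ) : ℂ) ^ s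
      = (a : ℂ) ^ (-s) / 2 * (1 / (n : ℂ) ^ (s - 2) + 1 / (n : ℂ) ^ (s - 1)) := by
  rcases eq_or_ne n 0 with rfl | hn
  -- both sides vanish: `0 ^ w = 0` for `w ≠ 0`, and `1 / 0 = 0`
  · simp [Complex.zero_cpow (sub_ne_zero.mpr hs₁), Complex.zero_cpow (sub_ne_zero.mpr hs₂)]
  have hn' : (n : ℂ) ≠ 0 := Nat.cast_ne_zero.mpr hn
  have ha' : (a : ℂ) ≠ 0 := Complex.ofReal_ne_zero.mpr ha.ne'
  rw [Complex.ofReal_mul, Complex.mul_cpow_ofReal_nonneg ha.le n.cast_nonneg,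
    Complex.ofReal_natCast, Complex.cpow_sub _ _ hn', Complex.cpow_sub _ _ hn', Complex.cpow_neg,
    Complex.cpow_one, Complex.cpow_ofNat, Nat.cast_choose_two]
  have hns : (n : ℂ) ^ s ≠ 0 := fun h ↦ hn' ((Complex.cpow_eq_zero_iff _ _).mp h).1
  have has : (a : ℂ) ^ s ≠ 0 := fun h ↦ ha' ((Complex.cpow_eq_zero_iff _ _).mp h).1
  push_cast
  field_simp
  ring

lemma hasSum_choose_two_div_mul_cpow {a : ℝ} (ha : 0 < a) {s : ℂ} (hs : 3 < s.re) :
    HasSum (fun n : ℕ ↦ ((n + 1).choose 2 : ℂ) / ((a * n : ℝ) : ℂ) ^ s)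
      ((a : ℂ) ^ (-s) / 2 * (riemannZeta (s - 2) + riemannZeta (s - 1))) := by
  have hζ (w : ℂ) (hw : 1 < w.re) : HasSum (fun n : ℕ ↦ 1 / (n : ℂ) ^ w) (riemannZeta w) :=
    zeta_eq_tsum_one_div_nat_cpow hw ▸ (Complex.summable_one_div_nat_cpow.mpr hw).hasSum
  have hs₁ : s ≠ 1 := by rintro rfl; norm_num at hs
  have hs₂ : s ≠ 2 := by rintro rfl; norm_num at hs
  refine (((hζ _ ?_).add (hζ _ ?_)).mul_left _).congr_fun
    (choose_two_div_mul_cpow_eq ha hs₁ hs₂)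
  all_goals norm_num; linarith

lemma mellin_exp_div_one_sub_exp_cube {a : ℝ} (ha : 0 < a) {s : ℂ} (hs : 3 < s.re) :
    mellin (fun u : ℝ ↦ ((rexp (-(a * u)) / (1 - rexp (-(a * u))) ^ 3 : ℝ) : ℂ)) s
      = Complex.Gamma s * (a : ℂ) ^ (-s) * (riemannZeta (s - 2) + riemannZeta (s - 1)) / 2 := by
  have hDir := hasSum_choose_two_div_mul_cpow ha hs
  have hp (n : ℕ) : ((n + 1).choose 2 : ℂ) = 0 ∨ 0 < a * n := by
    rcases eq_or_ne n 0 with rfl | hn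
    · simp
    · exact Or.inr (by positivity)
  have hF (t : ℝ) (ht : t ∈ Ioi 0) :
      HasSum (fun n : ℕ ↦ ((n + 1).choose 2 : ℂ) * rexp (-(a * n) * t))
        ((rexp (-(a * t)) / (1 - rexp (-(a * t))) ^ 3 : ℝ) : ℂ) := by
    refine (Complex.hasSum_ofReal.mpr (hasSum_choose_two_mul_exp_neg (mul_pos ha ht))).congr_fun
      fun n ↦ ?_
    push_cast
    ring_nf
  have hnorm : Summable fun n : ℕ ↦ ‖((n + 1).choose 2 : ℂ)‖ / (a * n) ^ s.re := by
    refine (summable_norm_iff.mpr hDir.summable).congr fun n ↦ ?_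
    rw [norm_div, Complex.norm_cpow_eq_rpow_re_of_nonneg (by positivity) (by linarith)]
  have hMellin := hasSum_mellin hp (by linarith) hF hnorm
  simp_rw [mul_div_assoc] at hMellin
  rw [hMellin.unique (hDir.mul_left _)]
  ring

/-- The Mellin transform identity `∫₀^∞ u^{z-1} · u e^{-2πu}/(1-e^{-2πu})³ du
  = Γ(z) z (2π)^{-(z+1)} (ζ(z-1)+ζ(z))/2` for `Re z > 2`. -/
theorem mellin_g_three_tilde (z : ℂ) (hz : 2 < z.re) :
    ∫ u in Set.Ioi (0 : ℝ),
        (u : ℂ) ^ (z - 1) *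
          ((u * Real.exp (-(2 * π * u)) / (1 - Real.exp (-(2 * π * u))) ^ 3 : ℝ) : ℂ)
      = Complex.Gamma z * z * (2 * (π : ℂ)) ^ (-(z + 1)) *
          ((riemannZeta (z - 1) + riemannZeta z) / 2) := by
  have hz₀ : z ≠ 0 := by rintro rfl; norm_num at hz
  have hlhs : (∫ u in Ioi (0 : ℝ), (u : ℂ) ^ (z - 1) *
        ((u * rexp (-(2 * π * u)) / (1 - rexp (-(2 * π * u))) ^ 3 : ℝ) : ℂ))
      = mellin (fun u : ℝ ↦ (u : ℂ) ^ (1 : ℂ) •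
          ((rexp (-(2 * π * u)) / (1 - rexp (-(2 * π * u))) ^ 3 : ℝ) : ℂ)) z := by
    refine setIntegral_congr_fun measurableSet_Ioi fun u _ ↦ ?_
    simp only [smul_eq_mul, Complex.cpow_one]
    push_cast
    ring
  rw [hlhs, mellin_cpow_smul, mellin_exp_div_one_sub_exp_cube (by positivity) (by simp; linarith),
    Complex.Gamma_add_one z hz₀, show z + 1 - 2 = z - 1 by ring, add_sub_cancel_right]
  push_cast
  ring
end

section
/- As u → 0⁺ one has g̃₃(u) = 1/(8π³u²) + 1/(8π²u) + O(u); that is, the function u ↦ g̃₃(u) − 1/(8π³u²) − 1/(8π²u) is O(u) as u tends to 0 from the right (in particular its constant term vanishes). -/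
/-!
Put `t = 2πu` and `N(t, x) = t³x − (1 + t/2)(1 − x)³`. Then the difference in question equals
`(2π)⁻¹ · N(t, e^{-t}) / (t² (1 − e^{-t})³)`. Replacing `e^{-t}` by its Taylor polynomial of
degree 5 changes `N` by `O(t⁶)` and turns it into `t⁶` times a polynomial, so
`N(t, e^{-t}) = O(t⁶)`; since `1 − e^{-t} ~ t`, the quotient is `O(t)`.
-/

open Real Filter Asymptotics Finset Topology

theorem Real.exp_sub_sum_range_isBigO {n : ℕ} (hn : 0 < n) :
    (fun x : ℝ => exp x - ∑ m ∈ range n, x ^ m / m.factorial) =O[𝓝 0] (fun x => x ^ n) := by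
  refine .of_bound ((n.succ : ℝ) / (n.factorial * n)) ?_
  filter_upwards [Metric.closedBall_mem_nhds (0 : ℝ) one_pos] with x hx
  rw [Metric.mem_closedBall, dist_zero_right, norm_eq_abs] at hx
  simpa [abs_pow, mul_comm] using exp_bound hx hn

theorem Real.exp_neg_sub_sum_range_isBigO {n : ℕ} (hn : 0 < n) :
    (fun x : ℝ => exp (-x) - ∑ m ∈ range n, (-x) ^ m / m.factorial) =O[𝓝 0]
      (fun x => x ^ n) := by
  have hneg : Tendsto (fun x : ℝ => -x) (𝓝 0) (𝓝 0) := by simpa using tendsto_neg (0 : ℝ)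
  refine ((exp_sub_sum_range_isBigO hn).comp_tendsto hneg).trans ?_
  exact isBigO_of_le _ fun x => by simp [norm_pow]

theorem one_sub_exp_neg_isEquivalent_id : (fun t : ℝ => 1 - exp (-t)) ~[𝓝 0] id := by
  have hsub : (fun t : ℝ => 1 - exp (-t)) - id =
      fun t => -(exp (-t) - ∑ m ∈ range 2, (-t) ^ m / m.factorial) := by
    funext t
    simp only [Pi.sub_apply, id_eq, sum_range_succ, range_one, sum_singleton, pow_zero,
      Nat.factorial_zero, Nat.cast_one, div_one, pow_one, Nat.factorial_one]
    ring
  unfold IsEquivalent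
  rw [hsub]
  exact (exp_neg_sub_sum_range_isBigO two_pos).neg_left.trans_isLittleO
    (isLittleO_pow_id one_lt_two)

theorem one_sub_exp_neg_ne_zero {t : ℝ} (ht : t ≠ 0) : 1 - exp (-t) ≠ 0 := by
  rw [sub_ne_zero, ne_comm, Ne, exp_eq_one_iff, neg_eq_zero]
  exact ht

noncomputable def gThreeNumerator (t x : ℝ) : ℝ := t ^ 3 * x - (1 + t / 2) * (1 - x) ^ 3

theorem gThreeNumerator_sub (t a b : ℝ) :
    gThreeNumerator t a - gThreeNumerator t b =
      (a - b) * (t ^ 3 + (1 + t / 2) * ((1 - a) ^ 2 + (1 - a) * (1 - b) + (1 - b) ^ 2)) := by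
  unfold gThreeNumerator
  ring

theorem gThreeNumerator_exp_neg_taylor_isBigO :
    (fun t : ℝ => gThreeNumerator t (∑ m ∈ range 6, (-t) ^ m / m.factorial)) =O[𝓝 0]
      (fun t => t ^ 6) := by
  set q : ℝ → ℝ := fun t => -(1/24) + (7/120) * t - (23/480) * t ^ 2 + (53/2160) * t ^ 3
    - (89/8640) * t ^ 4 + (193/57600) * t ^ 5 - (61/69120) * t ^ 6 + (127/691200) * t ^ 7
    - (7/230400) * t ^ 8 + (13/3456000) * t ^ 9 - (1/3456000) * t ^ 10 with hq
  have hfactor : (fun t : ℝ => gThreeNumerator t (∑ m ∈ range 6, (-t) ^ m / m.factorial)) =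
      fun t => t ^ 6 * q t := by
    funext t
    simp only [gThreeNumerator, hq, sum_range_succ, range_one, sum_singleton, Nat.factorial,
      Nat.cast_one]
    ring
  have hq_cont : Continuous q := by fun_prop
  rw [hfactor]
  simpa using (isBigO_refl (fun t : ℝ => t ^ 6) _).mul ((hq_cont.tendsto 0).isBigO_one (F := ℝ))

theorem gThreeNumerator_exp_neg_isBigO :
    (fun t : ℝ => gThreeNumerator t (exp (-t))) =O[𝓝 0] (fun t => t ^ 6) := by
  set p : ℝ → ℝ := fun t => ∑ m ∈ range 6, (-t) ^ m / m.factorial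
  set M : ℝ → ℝ := fun t => t ^ 3 + (1 + t / 2) *
    ((1 - exp (-t)) ^ 2 + (1 - exp (-t)) * (1 - p t) + (1 - p t) ^ 2) with hM
  have hsplit : (fun t : ℝ => gThreeNumerator t (exp (-t))) =
      fun t => gThreeNumerator t (p t) + (exp (-t) - p t) * M t := by
    funext t
    rw [hM, ← gThreeNumerator_sub, add_sub_cancel]
  have hM_cont : Continuous M := by fun_prop
  rw [hsplit]
  refine gThreeNumerator_exp_neg_taylor_isBigO.add ?_
  simpa using (exp_neg_sub_sum_range_isBigO (by norm_num : 0 < 6)).mul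
    ((hM_cont.tendsto 0).isBigO_one (F := ℝ))

theorem mul_exp_neg_div_one_sub_exp_neg_cube_sub_isBigO :
    (fun t : ℝ => t * exp (-t) / (1 - exp (-t)) ^ 3 - 1 / t ^ 2 - 1 / (2 * t)) =O[𝓝 0]
      (fun t => t) := by
  have hden : (fun t : ℝ => t ^ 5) =O[𝓝 0] fun t => t ^ 2 * (1 - exp (-t)) ^ 3 := by
    refine ((isBigO_refl (fun t : ℝ => t ^ 2) (𝓝 0)).mul
      (one_sub_exp_neg_isEquivalent_id.symm.isBigO.pow 3)).congr_left fun t => ?_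
    simp only [id, ← pow_add]
  have hinv := hden.inv_rev (.of_forall fun t ht => by simp_all)
  refine (gThreeNumerator_exp_neg_isBigO.mul hinv).congr (fun t => ?_) (fun t => ?_)
  · rcases eq_or_ne t 0 with rfl | ht
    · simp [gThreeNumerator]
    have := one_sub_exp_neg_ne_zero ht
    field_simp
    simp only [gThreeNumerator]
    ring
  · rcases eq_or_ne t 0 with rfl | ht
    · simp
    field_simp

/-- As `u → 0⁺`, `g̃₃(u) = u e^{-2πu}/(1-e^{-2πu})³ = 1/(8π³u²) + 1/(8π²u) + O(u)`. -/
theorem g_three_tilde_expansion_at_zero :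
    (fun u : ℝ =>
        u * Real.exp (-(2 * π * u)) / (1 - Real.exp (-(2 * π * u))) ^ 3
          - 1 / (8 * π ^ 3 * u ^ 2) - 1 / (8 * π ^ 2 * u))
      =O[nhdsWithin 0 (Set.Ioi (0 : ℝ))] (fun u : ℝ => u) := by
  have hscale : Tendsto (fun u : ℝ => 2 * π * u) (𝓝 0) (𝓝 0) := by
    simpa using (tendsto_id (x := 𝓝 (0 : ℝ))).const_mul (2 * π)
  have hcomp := ((mul_exp_neg_div_one_sub_exp_neg_cube_sub_isBigO.comp_tendsto hscale)
    |>.const_mul_left (2 * π)⁻¹).trans (isBigO_const_mul_self (2 * π) (fun u : ℝ => u) _)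
  refine (hcomp.congr_left fun u => ?_).mono nhdsWithin_le_nhds
  rcases eq_or_ne u 0 with rfl | hu
  · simp
  have := one_sub_exp_neg_ne_zero (mul_ne_zero (by positivity : 2 * π ≠ 0) hu)
  simp only [Function.comp_apply]
  field_simp
  ring
end

section
/- Let n ∈ ℕ. The function F : ℂ → ℂ, F(z) = (2π)^{−z} · (ζ(z−1) + (n/2)·ζ(z) − (z/2)·(ζ(z−1) + ζ(z))), is complex differentiable at z = 0 and its derivative there equals (24·ζ′(−1) + 2·log(2π) + 7)/24, where ζ′(−1) denotes the complex derivative of ζ at −1. -/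
open Real Complex

/-! Writing `F(z) = (2π)^{-z} G(z)`, the product rule gives `F'(0) = G'(0) - log(2π) G(0)`.
The values `ζ(0) = -1/2`, `ζ(-1) = -1/12` and `ζ'(0) = -log(2π)/2` give
`G(0) = -1/12 - n/4` and `G'(0) = ζ'(-1) - (n/4) log(2π) + 7/24`; the terms in `n` cancel. -/

lemma log_two_mul_pi_eq_ofReal : Complex.log (2 * π) = (Real.log (2 * π) : ℂ) := by
  rw [Complex.ofReal_log (by positivity)]
  push_cast
  rfl

lemma riemannZeta_neg_one : riemannZeta (-1) = -1 / 12 := by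
  rw [show (-1 : ℂ) = -(1 : ℕ) by norm_num, riemannZeta_neg_nat_eq_bernoulli']
  norm_num [bernoulli'_two]

lemma hasDerivAt_riemannZeta_zero :
    HasDerivAt riemannZeta (-(Real.log (2 * π) : ℂ) / 2) 0 := by
  simpa [deriv_riemannZeta_zero, log_two_mul_pi_eq_ofReal] using
    (differentiableAt_riemannZeta zero_ne_one).hasDerivAt

lemma hasDerivAt_riemannZeta_sub_one {s : ℂ} (hs : s ≠ 2) :
    HasDerivAt (fun z : ℂ => riemannZeta (z - 1)) (deriv riemannZeta (s - 1)) s := by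
  have hs' : s - 1 ≠ 1 := fun h => hs (by linear_combination h)
  exact (differentiableAt_riemannZeta hs').hasDerivAt.comp_sub_const s 1

lemma HasDerivAt.cpow_neg_mul {c g' : ℂ} {g : ℂ → ℂ} (hc : c ≠ 0) (hg : HasDerivAt g g' 0) :
    HasDerivAt (fun z => c ^ (-z) * g z) (g' - Complex.log c * g 0) 0 := by
  have hpow : HasDerivAt (fun z : ℂ => c ^ (-z)) (-Complex.log c) 0 := by
    simpa using (hasDerivAt_neg (0 : ℂ)).const_cpow (c := c) (Or.inl hc)
  refine (hpow.mul hg).congr_deriv ?_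
  simp only [neg_zero, cpow_zero, one_mul]
  ring

/-- The function `F(z) = (2π)^{-z}(ζ(z-1) + (n/2)ζ(z) - (z/2)(ζ(z-1)+ζ(z)))` is
differentiable at `0` with `F'(0) = (24 ζ'(-1) + 2 log(2π) + 7)/24`. -/
theorem deriv_mellin_combination_alpha_one (n : ℕ) :
    HasDerivAt
      (fun z : ℂ => (2 * (π : ℂ)) ^ (-z) *
        (riemannZeta (z - 1) + ((n : ℂ) / 2) * riemannZeta z
          - (z / 2) * (riemannZeta (z - 1) + riemannZeta z)))
      ((24 * deriv riemannZeta (-1) + 2 * (Real.log (2 * π) : ℂ) + 7) / 24) 0 := by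
  have hζ₁ := hasDerivAt_riemannZeta_sub_one (s := 0) (by norm_num)
  have hζ₀ := hasDerivAt_riemannZeta_zero
  have hG := (hζ₁.add (hζ₀.const_mul ((n : ℂ) / 2))).sub
    (((hasDerivAt_id (0 : ℂ)).div_const 2).mul (hζ₁.add hζ₀))
  refine (hG.cpow_neg_mul (c := 2 * π) (by simp [Real.pi_ne_zero])).congr_deriv ?_
  simp only [Pi.add_apply, Pi.sub_apply, Pi.mul_apply, id, zero_sub, zero_div, zero_mul,
    add_zero, riemannZeta_zero, riemannZeta_neg_one, log_two_mul_pi_eq_ofReal]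
  ring
end

section
/- Let n ∈ ℕ and u > 0. Then ∫₀ᵘ (1 − e^{−4πv})^{−n} · (1 − e^{−4π(u−v)})^{−n} · (∫_{ℂⁿ} exp(−(B_{2v} + B_{2(u−v)})·‖Z‖²) dZ) dv = u · (1 − e^{−4πu})^{−n}. -/
/-! With `x = e^{-4πv}` and `y = e^{-4π(u-v)}` one has `B_{2v} = (π/2)(1+x)/(1-x)`, hence
`B_{2v} + B_{2(u-v)} = π(1-xy)/((1-x)(1-y))` with `xy = e^{-4πu}`. The Gaussian integral over
`ℂⁿ ≅ ℝ²ⁿ` is `(π/(B_{2v} + B_{2(u-v)}))ⁿ = ((1-x)(1-y)/(1-xy))ⁿ`, which cancels the two prefactors: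
the integrand is the constant `(1-e^{-4πu})^{-n}` on `(0, u)`. -/

open Real MeasureTheory intervalIntegral

noncomputable instance (n : ℕ) : MeasurableSpace (EuclideanSpace ℂ (Fin n)) := borel _
instance (n : ℕ) : BorelSpace (EuclideanSpace ℂ (Fin n)) := ⟨rfl⟩

theorem integral_exp_neg_mul_norm_sq_euclideanSpace_complex (n : ℕ) {b : ℝ} (hb : 0 < b) :
    ∫ Z : EuclideanSpace ℂ (Fin n), exp (-(b * ‖Z‖ ^ 2)) = (π / b) ^ n := by
  have hdim : Module.finrank ℝ (EuclideanSpace ℂ (Fin n)) = 2 * n := by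
    rw [← Module.finrank_mul_finrank ℝ ℂ, Complex.finrank_real_complex, finrank_euclideanSpace,
      Fintype.card_fin]
  simp_rw [← neg_mul]
  rw [GaussianFourier.integral_rexp_neg_mul_sq_norm hb, hdim, Nat.cast_mul, Nat.cast_two,
    mul_div_cancel_left₀ _ two_ne_zero, rpow_natCast]

theorem tanh_eq_one_sub_exp_div_one_add_exp (t : ℝ) :
    tanh t = (1 - exp (-(2 * t))) / (1 + exp (-(2 * t))) := by
  have hexp : exp (-(2 * t)) = exp (-t) * exp (-t) := by rw [← exp_add]; ring_nf
  have hinv : exp t * exp (-t) = 1 := by rw [← exp_add, add_neg_cancel, exp_zero]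
  rw [tanh_eq, div_eq_div_iff (by positivity) (by positivity), hexp]
  linear_combination 2 * exp (-t) * hinv

/-- The coefficient `B_w` of the Mehler kernel. -/
noncomputable def mehlerCoeff (w : ℝ) : ℝ := π / (2 * tanh (π * w))

theorem exp_neg_four_pi_mul_lt_one {r : ℝ} (hr : 0 < r) : exp (-(4 * π * r)) < 1 :=
  exp_lt_one_iff.2 (neg_neg_of_pos (by positivity))

theorem mehlerCoeff_two_mul (s : ℝ) :
    mehlerCoeff (2 * s) = π / 2 * ((1 + exp (-(4 * π * s))) / (1 - exp (-(4 * π * s)))) := by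
  rw [mehlerCoeff, tanh_eq_one_sub_exp_div_one_add_exp,
    show 2 * (π * (2 * s)) = 4 * π * s by ring, div_mul_eq_div_div, div_div_eq_mul_div, mul_div_assoc]

theorem one_add_div_one_sub_add_one_add_div_one_sub {K : Type*} [Field K] {x y : K}
    (hx : x ≠ 1) (hy : y ≠ 1) :
    (1 + x) / (1 - x) + (1 + y) / (1 - y) = 2 * (1 - x * y) / ((1 - x) * (1 - y)) := by
  have hx' : 1 - x ≠ 0 := sub_ne_zero.2 hx.symm
  have hy' : 1 - y ≠ 0 := sub_ne_zero.2 hy.symm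
  field_simp
  ring

theorem mehlerCoeff_two_mul_add_mehlerCoeff_two_mul {s t : ℝ} (hs : 0 < s) (ht : 0 < t) :
    mehlerCoeff (2 * s) + mehlerCoeff (2 * t) =
      π * (1 - exp (-(4 * π * (s + t)))) /
        ((1 - exp (-(4 * π * s))) * (1 - exp (-(4 * π * t)))) := by
  have hexp : exp (-(4 * π * (s + t))) = exp (-(4 * π * s)) * exp (-(4 * π * t)) := by
    rw [← exp_add]; ring_nf
  rw [mehlerCoeff_two_mul, mehlerCoeff_two_mul, ← mul_add,
    one_add_div_one_sub_add_one_add_div_one_sub (exp_neg_four_pi_mul_lt_one hs).ne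
      (exp_neg_four_pi_mul_lt_one ht).ne, hexp]
  ring

theorem mehler_integrand_eq (n : ℕ) {s t : ℝ} (hs : 0 < s) (ht : 0 < t) :
    (1 - exp (-(4 * π * s))) ^ (-(n : ℤ)) * (1 - exp (-(4 * π * t))) ^ (-(n : ℤ)) *
        ∫ Z : EuclideanSpace ℂ (Fin n),
          exp (-((mehlerCoeff (2 * s) + mehlerCoeff (2 * t)) * ‖Z‖ ^ 2)) =
      (1 - exp (-(4 * π * (s + t)))) ^ (-(n : ℤ)) := by
  have hsub : ∀ {r : ℝ}, 0 < r → 0 < 1 - exp (-(4 * π * r)) := fun hr =>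
    sub_pos.2 (exp_neg_four_pi_mul_lt_one hr)
  have hcoeff := mehlerCoeff_two_mul_add_mehlerCoeff_two_mul hs ht
  have hpos : 0 < mehlerCoeff (2 * s) + mehlerCoeff (2 * t) := by
    rw [hcoeff]
    have := hsub hs; have := hsub ht; have := hsub (add_pos hs ht); positivity
  rw [integral_exp_neg_mul_norm_sq_euclideanSpace_complex n hpos, hcoeff, zpow_neg, zpow_neg,
    zpow_neg, zpow_natCast, zpow_natCast, zpow_natCast, ← inv_pow, ← inv_pow, ← inv_pow,
    ← mul_pow, ← mul_pow]
  congr 1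
  have := (hsub hs).ne'; have := (hsub ht).ne'; have := (hsub (add_pos hs ht)).ne'
  field_simp

/-- Semigroup integral identity for the Mehler kernel:
`∫₀ᵘ (1-e^{-4πv})^{-n} (1-e^{-4π(u-v)})^{-n}
    (∫_{ℂⁿ} exp(-(B_{2v}+B_{2(u-v)})‖Z‖²) dZ) dv = u (1-e^{-4πu})^{-n}`,
where `B_w = π/(2 tanh(π w))` and `ℂⁿ` carries the Lebesgue (Haar) measure. -/
theorem mehler_semigroup_integral (n : ℕ) (u : ℝ) (hu : 0 < u) :
    (∫ v in (0 : ℝ)..u,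
        (1 - Real.exp (-(4 * π * v))) ^ (-(n : ℤ)) *
          (1 - Real.exp (-(4 * π * (u - v)))) ^ (-(n : ℤ)) *
          (∫ Z : EuclideanSpace ℂ (Fin n),
            Real.exp (-((π / (2 * Real.tanh (π * (2 * v)))
              + π / (2 * Real.tanh (π * (2 * (u - v))))) * ‖Z‖ ^ 2))))
      = u * (1 - Real.exp (-(4 * π * u))) ^ (-(n : ℤ)) := by
  rw [integral_congr_Ioo_of_le hu.le (g := fun _ => (1 - exp (-(4 * π * u))) ^ (-(n : ℤ))),
    intervalIntegral.integral_const, smul_eq_mul, sub_zero]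
  rintro v ⟨hv, hvu⟩
  simpa only [add_sub_cancel, mehlerCoeff] using mehler_integrand_eq n hv (sub_pos.2 hvu)
end

section
/- Let n ∈ ℕ with n ≥ 1, let j be an index in {1,…,n}, and let u > 0. Then ∫₀ᵘ (1 − e^{−4πv})^{−n} · (1 − e^{−4π(u−v)})^{−n} · (∫_{ℂⁿ} |Z_j|² · exp(−(B_{2v} + B_{2(u−v)})·‖Z‖²) dZ) dv = (π·(1 − e^{−4πu})^{n+1})^{−1} · (u + u·e^{−4πu} − (1 − e^{−4πu})/(2π)). -/
open Real MeasureTheory intervalIntegral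

/-!
With `a = 2πv` and `b = 2π(u - v)`, the Mehler coefficient is
`B_{2v} + B_{2(u-v)} = (π/2)(coth a + coth b) = π sinh(a + b) / (2 sinh a sinh b)`, and the
Gaussian second moment on `ℂⁿ ≅ ℝ²ⁿ` is `∫ |Z_j|² e^{-c‖Z‖²} dZ = πⁿ / c^{n+1}`. Together with
`1 - e^{-2a} = 2 e^{-a} sinh a`, all powers of `sinh a`, `sinh b` cancel except one, and the
integrand becomes `e^{2πun} / (2ⁿ π sinh(2πu)^{n+1}) · 2 sinh a sinh b`. Since
`2 sinh a sinh b = cosh(a + b) - cosh(a - b)`, the remaining integral is elementary.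
-/

theorem integral_sq_mul_exp_neg_mul_sq {c : ℝ} (hc : 0 < c) :
    ∫ y : ℝ, y ^ 2 * exp (-(c * y ^ 2)) = √(π / c) / (2 * c) := by
  have hhalf := integral_rpow_mul_exp_neg_mul_rpow (p := 2) (q := 2) (by norm_num) (by norm_num) hc
  have hΓ : Gamma ((2 + 1) / 2) = √π / 2 := by
    rw [show (2 + 1) / 2 = (1 / 2 : ℝ) + 1 by norm_num, Gamma_add_one (by norm_num),
      Gamma_one_half_eq]
    ring
  have hpow : c ^ (-(2 + 1) / 2 : ℝ) = c⁻¹ * (√c)⁻¹ := by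
    rw [show (-(2 + 1) / 2 : ℝ) = -1 + -(1 / 2) by norm_num, rpow_add hc, rpow_neg_one,
      rpow_neg hc.le, sqrt_eq_rpow]
  simp only [rpow_two, neg_mul, hΓ, hpow] at hhalf
  have hsymm := integral_comp_abs (f := fun y => y ^ 2 * exp (-(c * y ^ 2)))
  simp only [sq_abs] at hsymm
  rw [hsymm, hhalf, sqrt_div' _ hc.le]
  field_simp

theorem integral_sq_mul_exp_neg_mul_sum_sq {κ : Type*} [Fintype κ] (a : κ) {c : ℝ}
    (hc : 0 < c) :
    ∫ y : κ → ℝ, y a ^ 2 * exp (-(c * ∑ s, y s ^ 2))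
      = √(π / c) ^ Fintype.card κ / (2 * c) := by
  classical
  set f : κ → ℝ → ℝ := fun s t => (if s = a then t ^ 2 else 1) * exp (-(c * t ^ 2))
  have hprod (y : κ → ℝ) : y a ^ 2 * exp (-(c * ∑ s, y s ^ 2)) = ∏ s, f s (y s) := by
    simp only [f, Finset.prod_mul_distrib, Finset.prod_ite_eq' Finset.univ a, Finset.mem_univ,
      if_true, ← exp_sum, Finset.mul_sum, Finset.sum_neg_distrib]
  have hfactor (s : κ) : ∫ t, f s t = (if s = a then (2 * c)⁻¹ else 1) * √(π / c) := by
    by_cases h : s = a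
    · simp [f, h, integral_sq_mul_exp_neg_mul_sq hc, div_eq_inv_mul]
    · simpa [f, h, neg_mul] using integral_gaussian c
  simp_rw [hprod]
  rw [volume_pi, integral_fintype_prod_eq_prod f]
  simp only [hfactor, Finset.prod_mul_distrib, Finset.prod_ite_eq' Finset.univ a, Finset.mem_univ,
    if_true, Finset.prod_const, Finset.card_univ]
  ring

theorem integral_inner_sq_mul_exp_neg_mul_sq_norm {E : Type*} [NormedAddCommGroup E]
    [InnerProductSpace ℝ E] [FiniteDimensional ℝ E] [MeasurableSpace E] [BorelSpace E]
    {e : E} (he : ‖e‖ = 1) {c : ℝ} (hc : 0 < c) :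
    ∫ x : E, inner ℝ e x ^ 2 * exp (-(c * ‖x‖ ^ 2))
      = √(π / c) ^ Module.finrank ℝ E / (2 * c) := by
  classical
  have hunit : Orthonormal ℝ ((↑) : ({e} : Set E) → E) := by
    rw [orthonormal_subtype_iff_ite]
    rintro v rfl w rfl
    simp [he]
  obtain ⟨u, b, heu, hb⟩ := hunit.exists_orthonormalBasis_extension
  let a : u := ⟨e, heu rfl⟩
  have hcoord (x : E) : inner ℝ e x = b.repr x a := by
    rw [b.repr_apply_apply, hb]
  have hnorm (x : E) : ‖x‖ ^ 2 = ∑ s, b.repr x s ^ 2 := by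
    rw [← b.repr.norm_map, EuclideanSpace.norm_sq_eq]
    simp
  calc ∫ x : E, inner ℝ e x ^ 2 * exp (-(c * ‖x‖ ^ 2))
      = ∫ x : E, b.repr x a ^ 2 * exp (-(c * ∑ s, b.repr x s ^ 2)) := by
        simp only [hcoord, hnorm]
    _ = ∫ y : EuclideanSpace ℝ u, y a ^ 2 * exp (-(c * ∑ s, y s ^ 2)) :=
        b.measurePreserving_measurableEquiv.integral_comp' (g := fun y : EuclideanSpace ℝ u =>
          y a ^ 2 * exp (-(c * ∑ s, y s ^ 2)))
    _ = ∫ y : u → ℝ, y a ^ 2 * exp (-(c * ∑ s, y s ^ 2)) :=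
        ((PiLp.volume_preserving_toLp u).integral_comp
          (MeasurableEquiv.toLp 2 _).measurableEmbedding _).symm
    _ = √(π / c) ^ Module.finrank ℝ E / (2 * c) := by
        rw [integral_sq_mul_exp_neg_mul_sum_sq a hc, Module.finrank_eq_card_basis b.toBasis]

/-- Stated for an arbitrary Borel σ-algebra, so that it applies to the `borel` instance on
`EuclideanSpace ℂ (Fin n)`, which differs syntactically from Mathlib's `WithLp` instance. -/
theorem EuclideanSpace.integral_sq_norm_apply_mul_exp_neg_mul_sq_norm {ι : Type*} [Fintype ι]
    [MeasurableSpace (EuclideanSpace ℂ ι)] [BorelSpace (EuclideanSpace ℂ ι)] (j : ι)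
    {c : ℝ} (hc : 0 < c) :
    ∫ Z : EuclideanSpace ℂ ι, ‖Z j‖ ^ 2 * exp (-(c * ‖Z‖ ^ 2))
      = π ^ Fintype.card ι / c ^ (Fintype.card ι + 1) := by
  classical
  have hre (Z : EuclideanSpace ℂ ι) :
      inner ℝ (EuclideanSpace.single j (1 : ℂ)) Z = (Z j).re := by
    simp [PiLp.inner_apply, Complex.inner, apply_ite, Finset.sum_ite_eq']
  have him (Z : EuclideanSpace ℂ ι) :
      inner ℝ (EuclideanSpace.single j Complex.I) Z = (Z j).im := by
    simp [PiLp.inner_apply, Complex.inner, apply_ite, Finset.sum_ite_eq']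
  have hsplit (Z : EuclideanSpace ℂ ι) : ‖Z j‖ ^ 2 * exp (-(c * ‖Z‖ ^ 2))
      = inner ℝ (EuclideanSpace.single j 1) Z ^ 2 * exp (-(c * ‖Z‖ ^ 2))
        + inner ℝ (EuclideanSpace.single j Complex.I) Z ^ 2 * exp (-(c * ‖Z‖ ^ 2)) := by
    rw [hre, him, Complex.sq_norm, Complex.normSq_apply]
    ring
  have hmoment (z : ℂ) (hz : ‖z‖ = 1) : ∫ Z : EuclideanSpace ℂ ι,
      inner ℝ (EuclideanSpace.single j z) Z ^ 2 * exp (-(c * ‖Z‖ ^ 2))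
      = π ^ Fintype.card ι / c ^ (Fintype.card ι + 1) / 2 := by
    rw [integral_inner_sq_mul_exp_neg_mul_sq_norm (by simpa using hz) hc,
      finrank_real_of_complex, finrank_euclideanSpace, pow_mul, sq_sqrt (by positivity), div_pow]
    field_simp
    ring
  have hpos : 0 < π ^ Fintype.card ι / c ^ (Fintype.card ι + 1) / 2 := by positivity
  simp_rw [hsplit]
  rw [integral_add (.of_integral_ne_zero ?_) (.of_integral_ne_zero ?_), hmoment 1 (by simp),
    hmoment Complex.I (by simp)]
  · ring
  all_goals rw [hmoment _ (by simp)]; exact hpos.ne'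

theorem Real.one_sub_exp_neg_two_mul (x : ℝ) : 1 - exp (-(2 * x)) = 2 * exp (-x) * sinh x := by
  have hsq : exp (-x) * exp (-x) = exp (-(2 * x)) := by rw [← exp_add]; ring_nf
  have hinv : exp (-x) * exp x = 1 := by rw [← exp_add, neg_add_cancel, exp_zero]
  rw [sinh_eq]
  linear_combination hsq - hinv

theorem Real.one_add_exp_neg_two_mul (x : ℝ) : 1 + exp (-(2 * x)) = 2 * exp (-x) * cosh x := by
  have hsq : exp (-x) * exp (-x) = exp (-(2 * x)) := by rw [← exp_add]; ring_nf
  have hinv : exp (-x) * exp x = 1 := by rw [← exp_add, neg_add_cancel, exp_zero]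
  rw [cosh_eq]
  linear_combination -hsq - hinv

theorem Real.inv_tanh_add_inv_tanh {x y : ℝ} (hx : sinh x ≠ 0) (hy : sinh y ≠ 0) :
    (tanh x)⁻¹ + (tanh y)⁻¹ = sinh (x + y) / (sinh x * sinh y) := by
  rw [tanh_eq_sinh_div_cosh, tanh_eq_sinh_div_cosh, sinh_add]
  field_simp
  ring

theorem integral_two_mul_sinh_mul_sinh_sub {k : ℝ} (hk : k ≠ 0) (u : ℝ) :
    ∫ v in 0..u, 2 * sinh (k * v) * sinh (k * (u - v)) = u * cosh (k * u) - sinh (k * u) / k := by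
  have hprod (v : ℝ) : 2 * sinh (k * v) * sinh (k * (u - v))
      = cosh (k * u) - cosh (2 * k * v - k * u) := by
    rw [show k * u = k * v + k * (u - v) by ring, show 2 * k * v - (k * v + k * (u - v))
      = k * v - k * (u - v) by ring, cosh_add, cosh_sub]
    ring
  simp_rw [hprod]
  rw [integral_sub intervalIntegrable_const
      ((by fun_prop : Continuous fun v => cosh (2 * k * v - k * u)).intervalIntegrable _ _),
    intervalIntegral.integral_const, integral_comp_mul_sub (fun x => cosh x)
      (mul_ne_zero two_ne_zero hk),
    integral_eq_sub_of_hasDerivAt (fun x _ => hasDerivAt_sinh x)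
      (continuous_cosh.intervalIntegrable _ _),
    show 2 * k * u - k * u = k * u by ring, show 2 * k * 0 - k * u = -(k * u) by ring, sinh_neg,
    smul_eq_mul, smul_eq_mul]
  field_simp
  ring

theorem mehler_integrand_eq_of_mem_Ioo {n : ℕ} (j : Fin n) {u v : ℝ} (hv : v ∈ Set.Ioo 0 u) :
    (1 - exp (-(4 * π * v))) ^ (-(n : ℤ)) * (1 - exp (-(4 * π * (u - v)))) ^ (-(n : ℤ)) *
      (∫ Z : EuclideanSpace ℂ (Fin n), ‖Z j‖ ^ 2 *
        exp (-((π / (2 * tanh (π * (2 * v))) + π / (2 * tanh (π * (2 * (u - v))))) * ‖Z‖ ^ 2)))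
      = exp (2 * π * u) ^ n / (2 ^ n * π * sinh (2 * π * u) ^ (n + 1)) *
        (2 * sinh (2 * π * v) * sinh (2 * π * (u - v))) := by
  obtain ⟨hv0, hvu⟩ := hv
  set a := 2 * π * v
  set b := 2 * π * (u - v)
  have ha : 0 < sinh a := sinh_pos_iff.mpr (by positivity)
  have hb : 0 < sinh b := sinh_pos_iff.mpr (mul_pos two_pi_pos (sub_pos.mpr hvu))
  have hab : 0 < sinh (a + b) := sinh_pos_iff.mpr (by positivity)
  have hcoef : π / (2 * tanh (π * (2 * v))) + π / (2 * tanh (π * (2 * (u - v))))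
      = π * sinh (a + b) / (2 * (sinh a * sinh b)) := by
    calc π / (2 * tanh (π * (2 * v))) + π / (2 * tanh (π * (2 * (u - v))))
        = π / 2 * ((tanh a)⁻¹ + (tanh b)⁻¹) := by
          rw [show π * (2 * v) = a by ring, show π * (2 * (u - v)) = b by ring]
          ring
      _ = π * sinh (a + b) / (2 * (sinh a * sinh b)) := by
          rw [inv_tanh_add_inv_tanh ha.ne' hb.ne']
          ring
  rw [hcoef, EuclideanSpace.integral_sq_norm_apply_mul_exp_neg_mul_sq_norm j (by positivity),
    Fintype.card_fin, show 4 * π * v = 2 * a by ring, show 4 * π * (u - v) = 2 * b by ring,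
    show 2 * π * u = a + b by ring, one_sub_exp_neg_two_mul, one_sub_exp_neg_two_mul,
    show exp (a + b) = (exp (-a) * exp (-b))⁻¹ by
      rw [← exp_add, ← exp_neg, neg_add, neg_neg, neg_neg],
    zpow_neg, zpow_neg, zpow_natCast, zpow_natCast]
  have := ha.ne'
  have := hb.ne'
  have := hab.ne'
  simp only [div_pow, mul_pow, inv_pow]
  field_simp
  ring

theorem mehler_second_moment_integral_general (n : ℕ) (j : Fin n)
    (u : ℝ) (hu : 0 < u) :
    (∫ v in (0 : ℝ)..u,
        (1 - Real.exp (-(4 * π * v))) ^ (-(n : ℤ)) *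
          (1 - Real.exp (-(4 * π * (u - v)))) ^ (-(n : ℤ)) *
          (∫ Z : EuclideanSpace ℂ (Fin n),
            ‖Z j‖ ^ 2 *
              Real.exp (-((π / (2 * Real.tanh (π * (2 * v)))
                + π / (2 * Real.tanh (π * (2 * (u - v))))) * ‖Z‖ ^ 2))))
      = (π * (1 - Real.exp (-(4 * π * u))) ^ (n + 1))⁻¹ *
          (u + u * Real.exp (-(4 * π * u)) - (1 - Real.exp (-(4 * π * u))) / (2 * π)) := by
  have hS : sinh (2 * π * u) ≠ 0 := (sinh_pos_iff.mpr (by positivity)).ne'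
  rw [integral_congr_Ioo_of_le hu.le (fun v hv => mehler_integrand_eq_of_mem_Ioo j hv),
    intervalIntegral.integral_const_mul, integral_two_mul_sinh_mul_sinh_sub two_pi_pos.ne',
    ← mul_one_add, show 4 * π * u = 2 * (2 * π * u) by ring, one_sub_exp_neg_two_mul,
    one_add_exp_neg_two_mul, exp_neg]
  simp only [mul_pow, inv_pow]
  field_simp
  ring

/-- Moment integral identity for the Mehler kernel:
`∫₀ᵘ (1-e^{-4πv})^{-n} (1-e^{-4π(u-v)})^{-n}
    (∫_{ℂⁿ} |Z_j|² exp(-(B_{2v}+B_{2(u-v)})‖Z‖²) dZ) dv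
  = (π (1-e^{-4πu})^{n+1})⁻¹ (u + u e^{-4πu} - (1-e^{-4πu})/(2π))`,
where `B_w = π/(2 tanh(π w))` and `ℂⁿ` carries the Lebesgue (Haar) measure. -/
theorem mehler_second_moment_integral (n : ℕ) (hn : 1 ≤ n) (j : Fin n)
    (u : ℝ) (hu : 0 < u) :
    (∫ v in (0 : ℝ)..u,
        (1 - Real.exp (-(4 * π * v))) ^ (-(n : ℤ)) *
          (1 - Real.exp (-(4 * π * (u - v)))) ^ (-(n : ℤ)) *
          (∫ Z : EuclideanSpace ℂ (Fin n),
            ‖Z j‖ ^ 2 *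
              Real.exp (-((π / (2 * Real.tanh (π * (2 * v)))
                + π / (2 * Real.tanh (π * (2 * (u - v))))) * ‖Z‖ ^ 2))))
      = (π * (1 - Real.exp (-(4 * π * u))) ^ (n + 1))⁻¹ *
          (u + u * Real.exp (-(4 * π * u)) - (1 - Real.exp (-(4 * π * u))) / (2 * π)) :=
  mehler_second_moment_integral_general n j u hu
end
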